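/- Let X be a discrete random variable with finite support 𝒳, with binary partition random variables (A_⟨α⟩, ⟨α⟩ ∈ Ω) indexed by the unordered binary partitions of 𝒳, and let A_⟨{x}⟩ denote the indicator random variable of the element x ∈ 𝒳. Fix ⟨α⟩ ∈ Ω and suppose ⟨β⟩ ∈ Ω satisfies: (1) for every γ ⊆ α, H(A_⟨β⟩ | A_⟨{x}⟩, x ∈ γ) = 0 if and only if γ = α; and (2) for every γ ⊆ αᶜ, H(A_⟨β⟩ | A_⟨{x}⟩, x ∈ γ) = 0 if and only if γ = αᶜ. Then A_⟨β⟩ = A_⟨α⟩, i.e., ⟨β⟩ = ⟨α⟩. -/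
import Mathlib


open scoped BigOperators

/-- Probability of an event under a pmf `μ` on a finite outcome space. -/
noncomputable def probOf {Ω : Type*} [Fintype Ω] (μ : Ω → ℝ) (E : Set Ω) : ℝ :=
  ∑ ω, E.indicator μ ω

/-- Shannon entropy (in bits) of the random variable `X` on the finite
probability space `(Ω, μ)`. -/
noncomputable def shEntropy {Ω : Type*} {S : Type*} [Fintype Ω] (μ : Ω → ℝ) (X : Ω → S) : ℝ :=
  ∑ ω, μ ω * (- Real.logb 2 (probOf μ {ω' | X ω' = X ω}))

/-- Conditional Shannon entropy `H(Y | X)` (in bits). -/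
noncomputable def shCondEntropy {Ω S T : Type*} [Fintype Ω] (μ : Ω → ℝ)
    (Y : Ω → T) (X : Ω → S) : ℝ :=
  shEntropy μ (fun ω => (X ω, Y ω)) - shEntropy μ X

/-- The support of the random variable `X` (values taken with positive probability). -/
noncomputable def rvSupport {Ω S : Type*} [Fintype Ω] (μ : Ω → ℝ) (X : Ω → S) : Finset S := by
  classical exact (Finset.univ.filter fun ω => 0 < μ ω).image X

/-- `μ` is a probability mass function. -/
def IsPMF {Ω : Type*} [Fintype Ω] (μ : Ω → ℝ) : Prop :=
  (∀ ω, 0 ≤ μ ω) ∧ ∑ ω, μ ω = 1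

/-- A polymatroid on the finite ground set `Z`. -/
def IsPolymatroid {Z : Type*} [DecidableEq Z] (h : Finset Z → ℝ) : Prop :=
  h ∅ = 0 ∧ (∀ A : Finset Z, 0 ≤ h A) ∧ (∀ A B : Finset Z, A ⊆ B → h A ≤ h B) ∧
    ∀ A B : Finset Z, h (A ∩ B) + h (A ∪ B) ≤ h A + h B

/-- The binary partition random variable `A_⟨α⟩` of a random variable `X` for
a part `α` of the unordered binary partition `⟨α⟩ = {α, 𝒳 \ α}` of the support
`𝒳` of `X`: it records whether `X ∈ α` or not. -/
noncomputable def bpVarOf {Ω S : Type*} [Fintype Ω] (μ : Ω → ℝ) (X : Ω → S)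
    (α : Finset S) : Ω → Finset S := by
  classical exact fun ω => if X ω ∈ α then α else rvSupport μ X \ α

/-- `α` is (the part of) a nonempty binary partition of the support of `X`:
`α` is a nonempty proper subset of the support. -/
def IsBinPart {Ω S : Type*} [Fintype Ω] (μ : Ω → ℝ) (X : Ω → S)
    (α : Finset S) : Prop := by
  classical exact α ⊆ rvSupport μ X ∧ α.Nonempty ∧ (rvSupport μ X \ α).Nonempty

section Aux

open Real

variable {Ω S T : Type*} [Fintype Ω]

lemma probOf_mono' (μ : Ω → ℝ) (h0 : ∀ ω, 0 ≤ μ ω) {A B : Set Ω} (h : A ⊆ B) :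
    probOf μ A ≤ probOf μ B :=
  Finset.sum_le_sum fun ω _ => Set.indicator_le_indicator_of_subset h h0 ω

lemma le_probOf' (μ : Ω → ℝ) (h0 : ∀ ω, 0 ≤ μ ω) {E : Set Ω} {ω : Ω} (hω : ω ∈ E) :
    μ ω ≤ probOf μ E := by
  calc μ ω = E.indicator μ ω := (Set.indicator_of_mem hω μ).symm
    _ ≤ ∑ i, E.indicator μ i := Finset.single_le_sum
        (fun i _ => Set.indicator_apply_nonneg fun _ => h0 i) (Finset.mem_univ ω)

lemma probOf_add_le' (μ : Ω → ℝ) (h0 : ∀ ω, 0 ≤ μ ω) {A B : Set Ω} {ω : Ω}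
    (hBA : B ⊆ A) (hωA : ω ∈ A) (hωB : ω ∉ B) :
    probOf μ B + μ ω ≤ probOf μ A := by
  have hsingle : ∑ i, ({ω} : Set Ω).indicator μ i = μ ω := by
    rw [Finset.sum_eq_single ω]
    · exact Set.indicator_of_mem rfl μ
    · intro b _ hb; exact Set.indicator_of_notMem (by simp [hb]) μ
    · intro h; exact absurd (Finset.mem_univ ω) h
  have key : ∀ i, B.indicator μ i + ({ω} : Set Ω).indicator μ i ≤ A.indicator μ i := by
    intro i
    by_cases hi : i = ω
    · subst hi
      rw [Set.indicator_of_notMem hωB, Set.indicator_of_mem (s := ({i} : Set Ω)) rfl μ,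
        Set.indicator_of_mem hωA]
      simp
    · rw [Set.indicator_of_notMem (s := ({ω} : Set Ω)) (by simp [hi]), add_zero]
      by_cases hB : i ∈ B
      · rw [Set.indicator_of_mem hB, Set.indicator_of_mem (hBA hB)]
      · rw [Set.indicator_of_notMem hB]
        by_cases hA : i ∈ A
        · rw [Set.indicator_of_mem hA]; exact h0 i
        · rw [Set.indicator_of_notMem hA]
  calc probOf μ B + μ ω = ∑ i, (B.indicator μ i + ({ω} : Set Ω).indicator μ i) := by
        rw [Finset.sum_add_distrib, hsingle]; rfl
    _ ≤ ∑ i, A.indicator μ i := Finset.sum_le_sum fun i _ => key i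
    _ = probOf μ A := rfl

lemma shCondEntropy_eq_sum' (μ : Ω → ℝ) (Y : Ω → T) (X : Ω → S) :
    shCondEntropy μ Y X = ∑ ω, μ ω *
      (Real.logb 2 (probOf μ {ω' | X ω' = X ω}) -
       Real.logb 2 (probOf μ {ω' | X ω' = X ω ∧ Y ω' = Y ω})) := by
  rw [shCondEntropy, shEntropy, shEntropy, ← Finset.sum_sub_distrib]
  apply Finset.sum_congr rfl
  intro ω _
  have hset : {ω' | (fun ω => (X ω, Y ω)) ω' = (fun ω => (X ω, Y ω)) ω}
      = {ω' | X ω' = X ω ∧ Y ω' = Y ω} := by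
    ext ω'; simp [Prod.ext_iff]
  rw [hset]; ring

lemma shCondEntropy_eq_zero_of_det (μ : Ω → ℝ) (h0 : ∀ ω, 0 ≤ μ ω)
    (Y : Ω → T) (X : Ω → S)
    (h : ∀ ω1 ω2, 0 < μ ω1 → 0 < μ ω2 → X ω1 = X ω2 → Y ω1 = Y ω2) :
    shCondEntropy μ Y X = 0 := by
  rw [shCondEntropy_eq_sum']
  apply Finset.sum_eq_zero
  intro ω _
  rcases (h0 ω).eq_or_lt with hzero | hpos
  · rw [← hzero]; ring
  · have heq : probOf μ {ω' | X ω' = X ω ∧ Y ω' = Y ω} = probOf μ {ω' | X ω' = X ω} := by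
      unfold probOf
      apply Finset.sum_congr rfl
      intro ω' _
      rcases (h0 ω').eq_or_lt with hzero' | hpos'
      · by_cases hA : ω' ∈ ({ω' | X ω' = X ω ∧ Y ω' = Y ω} : Set Ω) <;>
        by_cases hB : ω' ∈ ({ω' | X ω' = X ω} : Set Ω) <;>
          simp [Set.indicator_apply, hA, hB, ← hzero']
      · by_cases hx : X ω' = X ω
        · have hy : Y ω' = Y ω := h ω' ω hpos' hpos hx
          rw [Set.indicator_of_mem (show ω' ∈ {ω' | X ω' = X ω ∧ Y ω' = Y ω} from ⟨hx, hy⟩),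
            Set.indicator_of_mem (show ω' ∈ {ω' | X ω' = X ω} from hx)]
        · rw [Set.indicator_of_notMem (show ω' ∉ {ω' | X ω' = X ω ∧ Y ω' = Y ω} by
              simp [Set.mem_setOf_eq, hx]),
            Set.indicator_of_notMem (show ω' ∉ {ω' | X ω' = X ω} from hx)]
    rw [heq]; ring

lemma det_of_shCondEntropy_eq_zero (μ : Ω → ℝ) (h0 : ∀ ω, 0 ≤ μ ω)
    (Y : Ω → T) (X : Ω → S) (h : shCondEntropy μ Y X = 0) :
    ∀ ω1 ω2, 0 < μ ω1 → 0 < μ ω2 → X ω1 = X ω2 → Y ω1 = Y ω2 := by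
  rw [shCondEntropy_eq_sum'] at h
  intro ω1 ω2 hp1 hp2 hX
  by_contra hY
  have hterm : ∀ ω ∈ Finset.univ, (0:ℝ) ≤ μ ω *
      (Real.logb 2 (probOf μ {ω' | X ω' = X ω}) -
       Real.logb 2 (probOf μ {ω' | X ω' = X ω ∧ Y ω' = Y ω})) := by
    intro ω _
    rcases (h0 ω).eq_or_lt with hz | hp
    · rw [← hz]; ring_nf; exact le_refl 0
    · have hq : 0 < probOf μ {ω' | X ω' = X ω ∧ Y ω' = Y ω} :=
        lt_of_lt_of_le hp (le_probOf' μ h0 ⟨rfl, rfl⟩)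
      have hpq : probOf μ {ω' | X ω' = X ω ∧ Y ω' = Y ω} ≤ probOf μ {ω' | X ω' = X ω} :=
        probOf_mono' μ h0 fun ω' hω' => hω'.1
      have := Real.logb_le_logb_of_le (b := 2) (by norm_num) hq hpq
      have := sub_nonneg.mpr this
      positivity
  have hall := (Finset.sum_eq_zero_iff_of_nonneg hterm).mp h ω1 (Finset.mem_univ ω1)
  have hq : 0 < probOf μ {ω' | X ω' = X ω1 ∧ Y ω' = Y ω1} :=
    lt_of_lt_of_le hp1 (le_probOf' μ h0 ⟨rfl, rfl⟩)
  have hpq : probOf μ {ω' | X ω' = X ω1 ∧ Y ω' = Y ω1} ≤ probOf μ {ω' | X ω' = X ω1} :=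
    probOf_mono' μ h0 fun ω' hω' => hω'.1
  have hp' : 0 < probOf μ {ω' | X ω' = X ω1} := lt_of_lt_of_le hq hpq
  have hlog : Real.logb 2 (probOf μ {ω' | X ω' = X ω1})
      = Real.logb 2 (probOf μ {ω' | X ω' = X ω1 ∧ Y ω' = Y ω1}) := by
    rcases mul_eq_zero.mp hall with h' | h'
    · exact absurd h' (ne_of_gt hp1)
    · linarith [sub_eq_zero.mp h']
  have heq : probOf μ {ω' | X ω' = X ω1} = probOf μ {ω' | X ω' = X ω1 ∧ Y ω' = Y ω1} :=
    Real.logb_injOn_pos (by norm_num : (1:ℝ) < 2) (Set.mem_Ioi.mpr hp') (Set.mem_Ioi.mpr hq) hlog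
  have hstrict := probOf_add_le' μ h0 (A := {ω' | X ω' = X ω1})
    (B := {ω' | X ω' = X ω1 ∧ Y ω' = Y ω1}) (ω := ω2)
    (fun ω' hω' => hω'.1) hX.symm (fun hc => hY hc.2.symm)
  linarith

lemma mem_rvSupport_iff' (μ : Ω → ℝ) (X : Ω → S) {x : S} :
    x ∈ rvSupport μ X ↔ ∃ ω, 0 < μ ω ∧ X ω = x := by
  classical
  unfold rvSupport
  simp [Finset.mem_image, Finset.mem_filter]

lemma bpVarOf_apply' [DecidableEq S] (μ : Ω → ℝ) (X : Ω → S) (δ : Finset S) (ω : Ω) :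
    bpVarOf μ X δ ω = if X ω ∈ δ then δ else rvSupport μ X \ δ := by
  unfold bpVarOf
  split_ifs with h
  · rfl
  · ext y; simp [Finset.mem_sdiff]

lemma indicator_ne [DecidableEq S] (μ : Ω → ℝ) (X : Ω → S) {x : S}
    (hx : x ∈ rvSupport μ X) : ({x} : Finset S) ≠ rvSupport μ X \ {x} := by
  intro h
  have : x ∈ rvSupport μ X \ ({x} : Finset S) := h ▸ Finset.mem_singleton_self x
  exact (Finset.mem_sdiff.mp this).2 (Finset.mem_singleton_self x)

lemma indTuple_iff [DecidableEq S] (μ : Ω → ℝ) (X : Ω → S) (γ : Finset S)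
    (hγ : γ ⊆ rvSupport μ X) (ω1 ω2 : Ω)
    (h : (fun (x : {y // y ∈ γ}) => bpVarOf μ X {x.1} ω1)
       = (fun (x : {y // y ∈ γ}) => bpVarOf μ X {x.1} ω2)) :
    ∀ x ∈ γ, (X ω1 = x ↔ X ω2 = x) := by
  intro x hx
  have hfx := congrFun h ⟨x, hx⟩
  simp only [bpVarOf_apply', Finset.mem_singleton] at hfx
  have hne := indicator_ne μ X (hγ hx)
  constructor
  · intro h1
    by_contra h2
    rw [if_pos h1, if_neg h2] at hfx
    exact hne hfx
  · intro h2
    by_contra h1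
    rw [if_neg h1, if_pos h2] at hfx
    exact hne hfx.symm

lemma cond_zero_of_const [DecidableEq S] (μ : Ω → ℝ) (h0 : ∀ ω, 0 ≤ μ ω)
    (X : Ω → S) (γ δ : Finset S) (hγ : γ ⊆ rvSupport μ X)
    (hconst : ∀ y z, y ∈ rvSupport μ X → z ∈ rvSupport μ X → y ∉ γ → z ∉ γ →
      (y ∈ δ ↔ z ∈ δ)) :
    shCondEntropy μ (bpVarOf μ X δ)
      (fun ω (x : {y // y ∈ γ}) => bpVarOf μ X {x.1} ω) = 0 := by
  apply shCondEntropy_eq_zero_of_det μ h0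
  intro ω1 ω2 hp1 hp2 hX
  have hiff := indTuple_iff μ X γ hγ ω1 ω2 hX
  rw [bpVarOf_apply', bpVarOf_apply']
  by_cases hm1 : X ω1 ∈ γ
  · have : X ω2 = X ω1 := (hiff _ hm1).mp rfl
    rw [this]
  · by_cases hm2 : X ω2 ∈ γ
    · have : X ω1 = X ω2 := (hiff _ hm2).mpr rfl
      rw [this]
    · have hs1 : X ω1 ∈ rvSupport μ X := (mem_rvSupport_iff' μ X).mpr ⟨ω1, hp1, rfl⟩
      have hs2 : X ω2 ∈ rvSupport μ X := (mem_rvSupport_iff' μ X).mpr ⟨ω2, hp2, rfl⟩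
      have hmem := hconst _ _ hs1 hs2 hm1 hm2
      by_cases hd : X ω1 ∈ δ
      · rw [if_pos hd, if_pos (hmem.mp hd)]
      · rw [if_neg hd, if_neg (fun hc => hd (hmem.mpr hc))]

end Aux

/-- Proposition 2: let `X` be a discrete random variable
with support `𝒳` of size at least 3, with binary partition random variables
`A_⟨α⟩` and indicator random variables `A_⟨{x}⟩`, `x ∈ 𝒳`.  If `⟨α⟩, ⟨β⟩` are
binary partitions of `𝒳` such that (1) for `γ ⊆ α`,
`H(A_⟨β⟩ | A_⟨{x}⟩, x ∈ γ) = 0` iff `γ = α`, and (2) for `γ ⊆ αᶜ`,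
`H(A_⟨β⟩ | A_⟨{x}⟩, x ∈ γ) = 0` iff `γ = αᶜ`, then `A_⟨β⟩ = A_⟨α⟩`, i.e.
`⟨β⟩ = ⟨α⟩`. -/
theorem bpVarOf_determined_by_indicators
    {Ω S : Type*} [Fintype Ω] [DecidableEq S]
    (μ : Ω → ℝ) (hμ0 : ∀ ω, 0 ≤ μ ω) (hμ1 : ∑ ω, μ ω = 1)
    (X : Ω → S) (hcard : 3 ≤ (rvSupport μ X).card)
    (α β : Finset S)
    (hα : IsBinPart μ X α) (hβ : IsBinPart μ X β)
    (h1 : ∀ γ ⊆ α,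
      (shCondEntropy μ (bpVarOf μ X β)
        (fun ω (x : {y // y ∈ γ}) => bpVarOf μ X {x.1} ω) = 0 ↔ γ = α))
    (h2 : ∀ γ ⊆ rvSupport μ X \ α,
      (shCondEntropy μ (bpVarOf μ X β)
        (fun ω (x : {y // y ∈ γ}) => bpVarOf μ X {x.1} ω) = 0 ↔ γ = rvSupport μ X \ α)) :
    β = α ∨ β = rvSupport μ X \ α := by
  classical
  obtain ⟨hαsub, hαne, hαcne⟩ := hα
  obtain ⟨hβsub, hβne, hβcne⟩ := hβ
  by_cases hc1 : β ⊆ α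
  · left
    exact (h1 β hc1).mp (cond_zero_of_const μ hμ0 X β β hβsub
      (fun y z _ _ hy hz => iff_of_false hy hz))
  · by_cases hc2 : β ⊆ rvSupport μ X \ α
    · right
      exact (h2 β hc2).mp (cond_zero_of_const μ hμ0 X β β hβsub
        (fun y z _ _ hy hz => iff_of_false hy hz))
    · by_cases hc3 : rvSupport μ X \ β ⊆ α
      · right
        have hkey : rvSupport μ X \ β = α := by
          apply (h1 (rvSupport μ X \ β) hc3).mp
          apply cond_zero_of_const μ hμ0 X _ β Finset.sdiff_subset
          intro y z hy𝒳 hz𝒳 hy hz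
          have hy' : y ∈ β := by
            by_contra hc; exact hy (Finset.mem_sdiff.mpr ⟨hy𝒳, hc⟩)
          have hz' : z ∈ β := by
            by_contra hc; exact hz (Finset.mem_sdiff.mpr ⟨hz𝒳, hc⟩)
          exact iff_of_true hy' hz'
        rw [← hkey, Finset.sdiff_sdiff_eq_self hβsub]
      · by_cases hc4 : rvSupport μ X \ β ⊆ rvSupport μ X \ α
        · left
          have hkey : rvSupport μ X \ β = rvSupport μ X \ α := by
            apply (h2 (rvSupport μ X \ β) hc4).mp
            apply cond_zero_of_const μ hμ0 X _ β Finset.sdiff_subset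
            intro y z hy𝒳 hz𝒳 hy hz
            have hy' : y ∈ β := by
              by_contra hc; exact hy (Finset.mem_sdiff.mpr ⟨hy𝒳, hc⟩)
            have hz' : z ∈ β := by
              by_contra hc; exact hz (Finset.mem_sdiff.mpr ⟨hz𝒳, hc⟩)
            exact iff_of_true hy' hz'
          have : rvSupport μ X \ (rvSupport μ X \ β)
              = rvSupport μ X \ (rvSupport μ X \ α) := by rw [hkey]
          rwa [Finset.sdiff_sdiff_eq_self hβsub, Finset.sdiff_sdiff_eq_self hαsub] at this
        · -- mixed case: contradiction
          exfalso
          obtain ⟨b, hbβ, hbα⟩ := Finset.not_subset.mp hc1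
          obtain ⟨b', hb'c, hb'α⟩ := Finset.not_subset.mp hc3
          have hb'β : b' ∉ β := (Finset.mem_sdiff.mp hb'c).2
          have hb𝒳 : b ∈ rvSupport μ X := hβsub hbβ
          have hb'𝒳 : b' ∈ rvSupport μ X := (Finset.mem_sdiff.mp hb'c).1
          obtain ⟨ω1, hp1, hX1⟩ := (mem_rvSupport_iff' μ X).mp hb𝒳
          obtain ⟨ω2, hp2, hX2⟩ := (mem_rvSupport_iff' μ X).mp hb'𝒳
          have hzero := (h1 α Finset.Subset.rfl).mpr rfl
          have hdet := det_of_shCondEntropy_eq_zero μ hμ0 _ _ hzero ω1 ω2 hp1 hp2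
          have htuple : (fun (x : {y // y ∈ α}) => bpVarOf μ X {x.1} ω1)
              = (fun (x : {y // y ∈ α}) => bpVarOf μ X {x.1} ω2) := by
            funext x
            rw [bpVarOf_apply', bpVarOf_apply']
            have h1' : X ω1 ∉ ({x.1} : Finset S) := by
              rw [Finset.mem_singleton, hX1]
              rintro rfl; exact hbα x.2
            have h2' : X ω2 ∉ ({x.1} : Finset S) := by
              rw [Finset.mem_singleton, hX2]
              rintro rfl; exact hb'α x.2
            rw [if_neg h1', if_neg h2']
          have hY := hdet htuple
          rw [bpVarOf_apply', bpVarOf_apply', hX1, hX2, if_pos hbβ, if_neg hb'β] at hY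
          have : b ∈ rvSupport μ X \ β := hY ▸ hbβ
          exact (Finset.mem_sdiff.mp this).2 hbβ
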